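/- arXiv:1808.07268 — 3 statements merged into one kernel-verified Lean document; each statement's English description precedes it below -/
import Mathlib

section
/- Let E(c, S) = Σ_{i=0}^{n-1} τ(S_i, c_i) be the ellipsoidal weight of a binary vector c ∈ F2^n with respect to LLRs S ∈ ℝ^n. Then for any c ∈ F2^{2n} and S ∈ ℝ^{2n}, E(c, S) = E(c_0^{n-1} ⊕ c_n^{2n-1}, S̃) + E(c_n^{2n-1}, S̄), where S̃_i = Q(S_i, S_{i+n}) and S̄_i = P(c_i ⊕ c_{i+n}, S_i, S_{i+n}). -/
/-- Penalty function τ(S,v): 0 if sgn(S) = (-1)^v (with τ(0,v)=0), else -|S|. -/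
noncomputable def tau (S : ℝ) (v : ZMod 2) : ℝ :=
  if (v = 0 ∧ 0 ≤ S) ∨ (v = 1 ∧ S ≤ 0) then 0 else -|S|

/-- Min-sum check-node update Q(a,b) = sgn(a)·sgn(b)·min(|a|,|b|). -/
noncomputable def Qf (a b : ℝ) : ℝ := Real.sign a * Real.sign b * min |a| |b|

/-- Variable-node update P(v,a,b) = (-1)^v·a + b. -/
noncomputable def Pf (v : ZMod 2) (a b : ℝ) : ℝ := (if v = 0 then a else -a) + b

/-- Ellipsoidal weight E(c,S) = Σ_{i<n} τ(S_i, c_i). -/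
noncomputable def Ew (n : ℕ) (c : ℕ → ZMod 2) (S : ℕ → ℝ) : ℝ :=
  ∑ i ∈ Finset.range n, tau (S i) (c i)

/-
Since τ(S, v) = min(0, (-1)^v S), multiplying the two LLRs of a coordinate pair by the signs
(-1)^{c_i} and (-1)^{c_{i+n}} removes the codeword from the identity: Q is odd in each argument
and P becomes a plain sum. What remains is the sign-free identity
min(0, x) + min(0, y) = min(0, Q(x, y)) + min(0, x + y), a case check on the signs of x and y,
and the theorem is its sum over the n coordinate pairs.
-/

lemma zmod2_eq_zero_or_eq_one (v : ZMod 2) : v = 0 ∨ v = 1 := by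
  revert v; decide

def bitSign (v : ZMod 2) : ℝ := if v = 0 then 1 else -1

lemma bitSign_add (u v : ZMod 2) : bitSign (u + v) = bitSign u * bitSign v := by
  obtain rfl | rfl := zmod2_eq_zero_or_eq_one u <;>
    obtain rfl | rfl := zmod2_eq_zero_or_eq_one v <;>
    simp [bitSign, CharTwo.add_self_eq_zero]

lemma bitSign_mul_self (v : ZMod 2) : bitSign v * bitSign v = 1 := by
  rw [← bitSign_add, CharTwo.add_self_eq_zero, bitSign, if_pos rfl]

lemma Pf_eq_bitSign_mul_add (v : ZMod 2) (a b : ℝ) : Pf v a b = bitSign v * a + b := by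
  unfold Pf bitSign; split_ifs <;> ring

lemma tau_eq_min_zero (S : ℝ) (v : ZMod 2) : tau S v = min 0 (bitSign v * S) := by
  obtain rfl | rfl := zmod2_eq_zero_or_eq_one v <;> simp only [tau, bitSign] <;> split_ifs <;> grind

lemma Qf_neg_left (a b : ℝ) : Qf (-a) b = -Qf a b := by simp [Qf, Real.sign_neg]

lemma Qf_neg_right (a b : ℝ) : Qf a (-b) = -Qf a b := by simp [Qf, Real.sign_neg]

lemma Qf_bitSign_mul (u v : ZMod 2) (a b : ℝ) :
    Qf (bitSign u * a) (bitSign v * b) = bitSign u * bitSign v * Qf a b := by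
  obtain rfl | rfl := zmod2_eq_zero_or_eq_one u <;>
    obtain rfl | rfl := zmod2_eq_zero_or_eq_one v <;>
    simp [bitSign, Qf_neg_left, Qf_neg_right]

lemma min_zero_add_min_zero (x y : ℝ) :
    min 0 x + min 0 y = min 0 (Qf x y) + min 0 (x + y) := by
  rcases lt_trichotomy x 0 with hx | rfl | hx <;> rcases lt_trichotomy y 0 with hy | rfl | hy <;>
    grind [Qf, Real.sign_of_neg, Real.sign_of_pos, Real.sign_zero]

lemma tau_add_tau (a b : ℝ) (u v : ZMod 2) :
    tau a u + tau b v = tau (Qf a b) (u + v) + tau (Pf (u + v) a b) v := by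
  have hP : bitSign v * Pf (u + v) a b = bitSign u * a + bitSign v * b := by
    rw [Pf_eq_bitSign_mul_add, bitSign_add]
    linear_combination bitSign u * a * bitSign_mul_self v
  simp only [tau_eq_min_zero, hP, bitSign_add, ← Qf_bitSign_mul]
  exact min_zero_add_min_zero _ _

/-- Lemma 1 (WeightSum). -/
theorem stmt1 (n : ℕ) (c : ℕ → ZMod 2) (S : ℕ → ℝ) :
    Ew (2 * n) c S =
      Ew n (fun i => c i + c (i + n)) (fun i => Qf (S i) (S (i + n))) +
      Ew n (fun i => c (i + n)) (fun i => Pf (c i + c (i + n)) (S i) (S (i + n))) := by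
  rw [Ew, Ew, Ew, two_mul, Finset.sum_range_add, ← Finset.sum_add_distrib,
    ← Finset.sum_add_distrib]
  refine Finset.sum_congr rfl fun i _ => ?_
  rw [add_comm n i, tau_add_tau]
end

section
/- Let A_m = F^{⊗m} be the m-fold Kronecker power of F = [[1,0],[1,1]] over F2. For any u ∈ F2^{2^m} and any LLR vector S ∈ ℝ^{2^m}, the ellipsoidal weight E(u·A_m, S) equals the successive cancellation path score Σ_{i=0}^{2^m - 1} τ(S_m^{(i)}(u_0^{i-1}, S), u_i), where the modified LLRs S_λ^{(i)} are computed recursively by S_λ^{(2i)}(v_0^{2i-1}) = Q(a, b) and S_λ^{(2i+1)}(v_0^{2i}) = P(v_{2i}, a, b), with a = S_{λ-1}^{(i)}(v_{0,even}^{2i-1} ⊕ v_{0,odd}^{2i-1}), b = S_{λ-1}^{(i)}(v_{0,odd}^{2i-1}), computed on the even- and odd-indexed halves of the channel LLRs respectively, and S_0^{(0)}(y_i) = S_i. -/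
/-- The polar transform `u ↦ u·A_m`, `A_m = F^{⊗m}` with `F = [[1,0],[1,1]]`,
computed recursively via the Plotkin structure `u·A_{m+1} = ((u'+u'')A_m | u''A_m)`. -/
def polarEnc : (m : ℕ) → (ℕ → ZMod 2) → ℕ → ZMod 2
  | 0, u => u
  | m + 1, u => fun j =>
      if j < 2 ^ m then polarEnc m (fun i => u i + u (i + 2 ^ m)) j
      else polarEnc m (fun i => u (i + 2 ^ m)) (j - 2 ^ m)

/-- The modified (min-sum) successive cancellation LLRs `S_λ^{(i)}(v, S)`:
`S_λ^{(2i)} = Q(a,b)`, `S_λ^{(2i+1)} = P(v_{2i}, a, b)`, where `a`, `b` are computed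
at layer `λ-1` on the even- and odd-indexed halves of the channel LLRs, with decision
vectors `(v_{2j} ⊕ v_{2j+1})_j` and `(v_{2j+1})_j` respectively; `S_0^{(0)} = S_0`. -/
noncomputable def sLLR : ℕ → (ℕ → ZMod 2) → (ℕ → ℝ) → ℕ → ℝ
  | 0, _, S, _ => S 0
  | lam + 1, v, S, i =>
      let a := sLLR lam (fun j => v (2 * j) + v (2 * j + 1)) (fun j => S (2 * j)) (i / 2)
      let b := sLLR lam (fun j => v (2 * j + 1)) (fun j => S (2 * j + 1)) (i / 2)
      if i % 2 = 0 then Qf a b else Pf (v (i - 1)) a b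

lemma Qf_core (a b : ℝ) : min (Qf a b) 0 + min (a + b) 0 = min a 0 + min b 0 := by
  rcases lt_trichotomy a 0 with ha | ha | ha <;>
  rcases lt_trichotomy b 0 with hb | hb | hb <;>
  simp [Qf, ha, hb, Real.sign_of_pos, Real.sign_of_neg, Real.sign_zero,
        abs_of_pos, abs_of_neg] <;>
  rcases le_total (a + b) 0 with h | h <;>
  simp [min_def] <;> split_ifs <;> linarith

lemma zmod2_cases : ∀ v : ZMod 2, v = 0 ∨ v = 1 := by decide

lemma tau_zero (S : ℝ) : tau S 0 = min S 0 := by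
  rcases le_or_gt 0 S with h | h
  · simp [tau, h, min_eq_right h]
  · simp [tau, h.not_ge, show ¬(0:ZMod 2) = 1 from by decide, abs_of_neg h,
      min_eq_left h.le]

lemma tau_one (S : ℝ) : tau S 1 = min (-S) 0 := by
  rcases le_or_gt S 0 with h | h
  · simp [tau, h, show ¬(1:ZMod 2) = 0 from by decide, min_eq_right (neg_nonneg.2 h)]
  · simp [tau, h.not_ge, show ¬(1:ZMod 2) = 0 from by decide, abs_of_pos h,
      min_eq_left (neg_nonpos.2 h.le)]

lemma lemma1 (a b : ℝ) (v w : ZMod 2) :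
    tau (Qf a b) v + tau (Pf v a b) w = tau a (v + w) + tau b w := by
  rcases zmod2_cases v with hv | hv <;> rcases zmod2_cases w with hw | hw <;>
    subst hv <;> subst hw
  · simpa [tau_zero, Pf] using Qf_core a b
  · have h := Qf_core (-a) (-b)
    rw [Qf_neg_left, Qf_neg_right, neg_neg] at h
    simp only [show (0:ZMod 2) + 1 = 1 from by decide, tau_zero, tau_one, Pf,
      eq_self_iff_true, if_true]
    rw [show -(a + b) = -a + -b by ring]
    exact h
  · have h := Qf_core (-a) b
    simp only [show (1:ZMod 2) + 0 = 1 from by decide, tau_zero, tau_one, Pf,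
      eq_false (show ¬(1:ZMod 2) = 0 from by decide), if_false]
    rw [← Qf_neg_left]
    exact h
  · have h := Qf_core a (-b)
    simp only [show (1:ZMod 2) + 1 = 0 from by decide, tau_zero, tau_one, Pf,
      eq_false (show ¬(1:ZMod 2) = 0 from by decide), if_false]
    rw [← Qf_neg_right, show -(-a + b) = a + -b by ring]
    exact h

lemma sum_pair (n : ℕ) (f : ℕ → ℝ) :
    ∑ i ∈ Finset.range (2 * n), f i
      = ∑ j ∈ Finset.range n, (f (2 * j) + f (2 * j + 1)) := by
  induction n with
  | zero => simp
  | succ n ih =>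
      rw [Finset.sum_range_succ, ← ih, show 2 * (n + 1) = 2 * n + 1 + 1 by ring,
        Finset.sum_range_succ, Finset.sum_range_succ]
      ring

lemma polarEnc_succ (m : ℕ) (u : ℕ → ZMod 2) (j : ℕ) :
    polarEnc (m + 1) u j =
      if j < 2 ^ m then polarEnc m (fun i => u i + u (i + 2 ^ m)) j
      else polarEnc m (fun i => u (i + 2 ^ m)) (j - 2 ^ m) := rfl

lemma polarEnc_even (m : ℕ) : ∀ (u : ℕ → ZMod 2) (j : ℕ), j < 2 ^ m →
    polarEnc (m + 1) u (2 * j) = polarEnc m (fun i => u (2 * i) + u (2 * i + 1)) j := by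
  induction m with
  | zero =>
      intro u j hj
      interval_cases j
      simp [polarEnc]
  | succ m ih =>
      intro u j hj
      have hp : (2:ℕ) ^ (m + 1) = 2 * 2 ^ m := by ring
      by_cases h : j < 2 ^ m
      · have h2 : 2 * j < 2 ^ (m + 1) := by omega
        rw [polarEnc_succ (m + 1) u, if_pos h2, ih _ _ h,
          polarEnc_succ m _ j, if_pos h]
        congr 1
        funext i
        rw [show 2 * (i + 2 ^ m) = 2 * i + 2 ^ (m + 1) by omega,
          show 2 * i + 2 ^ (m + 1) + 1 = 2 * i + 1 + 2 ^ (m + 1) by omega]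
        ring
      · have h2 : ¬ 2 * j < 2 ^ (m + 1) := by omega
        rw [polarEnc_succ (m + 1) u, if_neg h2,
          show 2 * j - 2 ^ (m + 1) = 2 * (j - 2 ^ m) by omega,
          ih _ _ (by omega), polarEnc_succ m _ j, if_neg h]
        congr 1
        funext i
        rw [show 2 * (i + 2 ^ m) = 2 * i + 2 ^ (m + 1) by omega,
          show 2 * i + 2 ^ (m + 1) + 1 = 2 * i + 1 + 2 ^ (m + 1) by omega]

lemma polarEnc_odd (m : ℕ) : ∀ (u : ℕ → ZMod 2) (j : ℕ), j < 2 ^ m →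
    polarEnc (m + 1) u (2 * j + 1) = polarEnc m (fun i => u (2 * i + 1)) j := by
  induction m with
  | zero =>
      intro u j hj
      interval_cases j
      simp [polarEnc]
  | succ m ih =>
      intro u j hj
      have hp : (2:ℕ) ^ (m + 1) = 2 * 2 ^ m := by ring
      by_cases h : j < 2 ^ m
      · have h2 : 2 * j + 1 < 2 ^ (m + 1) := by omega
        rw [polarEnc_succ (m + 1) u, if_pos h2, ih _ _ h,
          polarEnc_succ m _ j, if_pos h]
        congr 1
        funext i
        rw [show 2 * (i + 2 ^ m) + 1 = 2 * i + 1 + 2 ^ (m + 1) by omega]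
      · have h2 : ¬ 2 * j + 1 < 2 ^ (m + 1) := by omega
        rw [polarEnc_succ (m + 1) u, if_neg h2,
          show 2 * j + 1 - 2 ^ (m + 1) = 2 * (j - 2 ^ m) + 1 by omega,
          ih _ _ (by omega), polarEnc_succ m _ j, if_neg h]
        congr 1
        funext i
        rw [show 2 * (i + 2 ^ m) + 1 = 2 * i + 1 + 2 ^ (m + 1) by omega]

/-- Theorem 1: the ellipsoidal weight of `u·A_m` w.r.t. the channel LLRs equals the
successive cancellation path score `Σ_i τ(S_m^{(i)}(u_0^{i-1}, S), u_i)`. -/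
theorem stmt3 (m : ℕ) (u : ℕ → ZMod 2) (S : ℕ → ℝ) :
    Ew (2 ^ m) (polarEnc m u) S =
      ∑ i ∈ Finset.range (2 ^ m), tau (sLLR m u S i) (u i) := by
  induction m generalizing u S with
  | zero => simp [Ew, polarEnc, sLLR]
  | succ m ih =>
      have hp : (2:ℕ) ^ (m + 1) = 2 * 2 ^ m := by ring
      rw [Ew, hp, sum_pair, sum_pair]
      calc
        ∑ j ∈ Finset.range (2 ^ m),
            (tau (S (2 * j)) (polarEnc (m + 1) u (2 * j))
              + tau (S (2 * j + 1)) (polarEnc (m + 1) u (2 * j + 1)))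
            = (∑ j ∈ Finset.range (2 ^ m),
                tau (S (2 * j)) (polarEnc m (fun i => u (2 * i) + u (2 * i + 1)) j))
              + ∑ j ∈ Finset.range (2 ^ m),
                tau (S (2 * j + 1)) (polarEnc m (fun i => u (2 * i + 1)) j) := by
              rw [← Finset.sum_add_distrib]
              refine Finset.sum_congr rfl fun j hj => ?_
              rw [polarEnc_even m u j (Finset.mem_range.1 hj),
                polarEnc_odd m u j (Finset.mem_range.1 hj)]
        _ = Ew (2 ^ m) (polarEnc m (fun i => u (2 * i) + u (2 * i + 1)))
                (fun i => S (2 * i))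
              + Ew (2 ^ m) (polarEnc m (fun i => u (2 * i + 1)))
                (fun i => S (2 * i + 1)) := rfl
        _ = (∑ j ∈ Finset.range (2 ^ m),
              tau (sLLR m (fun i => u (2 * i) + u (2 * i + 1)) (fun i => S (2 * i)) j)
                (u (2 * j) + u (2 * j + 1)))
            + ∑ j ∈ Finset.range (2 ^ m),
              tau (sLLR m (fun i => u (2 * i + 1)) (fun i => S (2 * i + 1)) j)
                (u (2 * j + 1)) := by rw [ih, ih]
        _ = ∑ j ∈ Finset.range (2 ^ m),
              (tau (sLLR (m + 1) u S (2 * j)) (u (2 * j))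
                + tau (sLLR (m + 1) u S (2 * j + 1)) (u (2 * j + 1))) := by
              rw [← Finset.sum_add_distrib]
              refine Finset.sum_congr rfl fun j hj => ?_
              have e1 : 2 * j / 2 = j := by omega
              have e2 : 2 * j % 2 = 0 := by omega
              have e3 : (2 * j + 1) / 2 = j := by omega
              have e4 : (2 * j + 1) % 2 = 1 := by omega
              have e5 : 2 * j + 1 - 1 = 2 * j := by omega
              simp only [sLLR, e1, e2, e3, e4, e5, if_pos, if_neg, Nat.one_ne_zero,
                if_true, if_false]
              exact (lemma1 _ _ (u (2 * j)) (u (2 * j + 1))).symm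
end

section
/- Let C be the polar code of length 2^m with frozen set F ⊆ [2^m], i.e., C = {u·A_m : u ∈ F2^{2^m}, u_i = 0 for all i ∈ F}. Let F0 = F ∩ [2^{m-1}] and F1 = {j : j + 2^{m-1} ∈ F}, and let C0, C1 be the polar codes of length 2^{m-1} with frozen sets F0, F1. Then C = {(u + v, v) : u ∈ C0, v ∈ C1} (Plotkin decomposition). -/
/-!
Splitting indices into the halves `[0, 2^m)` and `[2^m, 2^(m+1))` turns `A_{m+1} = F ⊗ A_m` into
the block matrix `[[A_m, 0], [A_m, A_m]]`. Hence `(u₀, u₁) · A_{m+1} = (u₀ A_m + u₁ A_m, u₁ A_m)`,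
and the constraint `u_i = 0` for `i ∈ F` restricts `u₀` exactly by `F₀` and `u₁` exactly by `F₁`.
-/

/-- Arıkan's kernel F = [[1,0],[1,1]] over F2. -/
def Fk : Matrix (Fin 2) (Fin 2) (ZMod 2) := !![1, 0; 1, 1]

/-- A_m = F^{⊗m}: the m-fold Kronecker power of F, with standard Kronecker indexing
(A ⊗ B)_{(i1·n+i2),(j1·n+j2)} = A_{i1,j1}·B_{i2,j2}. -/
def Amat : (m : ℕ) → Matrix (Fin (2 ^ m)) (Fin (2 ^ m)) (ZMod 2)
  | 0 => 1
  | m + 1 => Matrix.of fun i j =>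
      Fk ⟨i.val / 2 ^ m, Nat.div_lt_of_lt_mul (by rw [← pow_succ]; exact i.isLt)⟩
         ⟨j.val / 2 ^ m, Nat.div_lt_of_lt_mul (by rw [← pow_succ]; exact j.isLt)⟩ *
      Amat m ⟨i.val % 2 ^ m, Nat.mod_lt _ (Nat.two_pow_pos m)⟩
             ⟨j.val % 2 ^ m, Nat.mod_lt _ (Nat.two_pow_pos m)⟩

/-- The polar code of length 2^m with frozen set `Fr`: all vectors `u·A_m`
with `u_i = 0` for `i ∈ Fr`. -/
def polarCode (m : ℕ) (Fr : Set (Fin (2 ^ m))) : Set (Fin (2 ^ m) → ZMod 2) :=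
  {c | ∃ u : Fin (2 ^ m) → ZMod 2, (∀ i ∈ Fr, u i = 0) ∧ c = Matrix.vecMul u (Amat m)}

/-- Minimum distance of a (linear) code: the least Hamming weight of a nonzero codeword. -/
noncomputable def minDist {n : ℕ} (C : Set (Fin n → ZMod 2)) : ℕ :=
  sInf {w | ∃ c ∈ C, c ≠ 0 ∧ hammingNorm c = w}

open Matrix

def splitEquiv (m : ℕ) : Fin (2 ^ m) ⊕ Fin (2 ^ m) ≃ Fin (2 ^ (m + 1)) :=
  finSumFinEquiv.trans (finCongr (Nat.two_pow_succ m).symm)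

@[simp]
lemma splitEquiv_inl_val {m : ℕ} (i : Fin (2 ^ m)) : (splitEquiv m (.inl i) : ℕ) = i := rfl

@[simp]
lemma splitEquiv_inr_val {m : ℕ} (j : Fin (2 ^ m)) :
    (splitEquiv m (.inr j) : ℕ) = j + 2 ^ m :=
  Nat.add_comm _ _

lemma sub_two_pow_lt_of_not_lt {m : ℕ} (k : Fin (2 ^ (m + 1))) (h : ¬k.val < 2 ^ m) :
    k.val - 2 ^ m < 2 ^ m := by
  have := k.isLt
  have := Nat.two_pow_succ m
  omega

def plotkin {R : Type*} [Add R] {m : ℕ} (u v : Fin (2 ^ m) → R) : Fin (2 ^ (m + 1)) → R :=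
  Sum.elim (u + v) v ∘ (splitEquiv m).symm

lemma plotkin_apply {R : Type*} [Add R] {m : ℕ} (u v : Fin (2 ^ m) → R) (k : Fin (2 ^ (m + 1))) :
    plotkin u v k =
      if h : k.val < 2 ^ m then u ⟨k.val, h⟩ + v ⟨k.val, h⟩
      else v ⟨k.val - 2 ^ m, sub_two_pow_lt_of_not_lt k h⟩ := by
  obtain ⟨i | j, rfl⟩ := (splitEquiv m).surjective k <;> simp [plotkin]

lemma Amat_succ (m : ℕ) :
    Amat (m + 1) = (fromBlocks (Amat m) 0 (Amat m) (Amat m)).submatrix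
      (splitEquiv m).symm (splitEquiv m).symm := by
  ext i j
  obtain ⟨a, rfl⟩ := (splitEquiv m).surjective i
  obtain ⟨b, rfl⟩ := (splitEquiv m).surjective j
  rcases a with i | i <;> rcases b with j | j <;>
    simp [Amat, Fk, Nat.div_eq_of_lt, Nat.mod_eq_of_lt, Nat.add_div_right, Nat.add_mod_right]

lemma vecMul_Amat_succ (m : ℕ) (w : Fin (2 ^ (m + 1)) → ZMod 2) :
    w ᵥ* Amat (m + 1) =
      plotkin ((w ∘ splitEquiv m ∘ .inl) ᵥ* Amat m) ((w ∘ splitEquiv m ∘ .inr) ᵥ* Amat m) := by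
  rw [Amat_succ, submatrix_vecMul_equiv, vecMul_fromBlocks, Equiv.symm_symm, vecMul_zero,
    zero_add]
  rfl

lemma polarCode_succ (m : ℕ) (Fr : Set (Fin (2 ^ (m + 1)))) :
    polarCode (m + 1) Fr =
      {c | ∃ u ∈ polarCode m (splitEquiv m ∘ .inl ⁻¹' Fr),
        ∃ v ∈ polarCode m (splitEquiv m ∘ .inr ⁻¹' Fr), c = plotkin u v} := by
  ext c
  constructor
  · rintro ⟨w, hw, rfl⟩
    exact ⟨_, ⟨_, fun i hi => hw _ hi, rfl⟩, _, ⟨_, fun j hj => hw _ hj, rfl⟩,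
      vecMul_Amat_succ m w⟩
  · rintro ⟨_, ⟨u, hu, rfl⟩, _, ⟨v, hv, rfl⟩, rfl⟩
    refine ⟨Sum.elim u v ∘ (splitEquiv m).symm, fun k hk => ?_, ?_⟩
    · obtain ⟨i | j, rfl⟩ := (splitEquiv m).surjective k
      · simpa using hu i hk
      · simpa using hv j hk
    · rw [vecMul_Amat_succ]
      simp [Function.comp_def]

/-- Plotkin decomposition of a polar code: with F0 = F ∩ [2^m] and
F1 = {j : j + 2^m ∈ F}, one has C = {(u+v | v) : u ∈ C0, v ∈ C1}. -/
theorem stmt4 (m : ℕ) (Fr : Set (Fin (2 ^ (m + 1)))) :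
    polarCode (m + 1) Fr =
      {c | ∃ u ∈ polarCode m {i : Fin (2 ^ m) |
              (⟨i.val, by have := i.isLt; have h : (2:ℕ)^(m+1) = 2^m * 2 := pow_succ 2 m; omega⟩ :
                Fin (2 ^ (m + 1))) ∈ Fr},
           ∃ v ∈ polarCode m {j : Fin (2 ^ m) |
              (⟨j.val + 2 ^ m, by have := j.isLt; have h : (2:ℕ)^(m+1) = 2^m * 2 := pow_succ 2 m; omega⟩ :
                Fin (2 ^ (m + 1))) ∈ Fr},
           c = fun k : Fin (2 ^ (m + 1)) =>
             if h : k.val < 2 ^ m then u ⟨k.val, h⟩ + v ⟨k.val, h⟩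
             else v ⟨k.val - 2 ^ m, by
               have := k.isLt; have h2 : (2:ℕ)^(m+1) = 2^m * 2 := pow_succ 2 m; omega⟩} := by
  rw [polarCode_succ]
  congr! with c u v
  · ext j
    exact iff_of_eq (congrArg (· ∈ Fr) (Fin.ext (splitEquiv_inr_val j)))
  · exact plotkin_apply u v _
end
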